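/- Let Γ be a finite alphabet, u a right-infinite word over Γ, and suppose the sequence of prefixes (u[0,n))_n has a cluster point in the profinite completion of Γ⁺ that is idempotent. Then u is recurrent: every finite prefix of u occurs again later in u. Conversely, if u is recurrent, then some cluster point of (u[0,n))_n is idempotent. -/

import Mathlib

/-- `pref u n` is the prefix u[0,n+1) of the right-infinite word u, as an
element of the free semigroup. -/
def pref {Γ : Type*} (u : ℕ → Γ) : ℕ → FreeSemigroup Γ
  | 0 => FreeSemigroup.of (u 0)
  | n + 1 => pref u n * FreeSemigroup.of (u (n + 1))

/-!
If `u` is recurrent, consider for each `n` the closure of the prefixes `u[0,a]` (`a ≥ n`) after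
which `u[0,n]` occurs again. Appending to such a prefix a shorter one of the same kind gives one
again, so the intersection of these decreasing compact sets is a nonempty closed subsemigroup; it
contains an idempotent (Ellis–Numakura), and each of its points is a cluster point of the prefixes.

Conversely, words of `Γ⁺` with the same prefix, suffix and factors of length `2n+1` form a congruence
of finite index. Its quotient map extends continuously to the profinite semigroup, so an idempotent
cluster point yields a long prefix `w` of `u` whose class is idempotent. Then the factor of `w w`
formed by the last `n+1` letters of `w` followed by its first `n` letters is a factor of `w`: this is
an occurrence of `u[0,n)` beyond position `n`.
-/

open Filter

namespace List

variable {α : Type*}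

theorem take_append_eq_take_append_take (K : ℕ) (a b : List α) :
    (a ++ b).take K = (a.take K ++ b.take K).take K := by
  rw [take_append, take_append, take_take, take_take, length_take, min_self]
  congr 2
  omega

theorem rtake_append_eq_rtake_append_rtake (K : ℕ) (a b : List α) :
    (a ++ b).rtake K = (a.rtake K ++ b.rtake K).rtake K := by
  simp only [rtake_eq_reverse_take_reverse, reverse_append, reverse_reverse,
    ← take_append_eq_take_append_take]

theorem rtake_suffix (K : ℕ) (l : List α) : l.rtake K <:+ l := drop_suffix _ _

theorem IsSuffix.suffix_rtake {x l : List α} {K : ℕ} (h : x <:+ l) (hK : x.length ≤ K) :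
    x <:+ l.rtake K := by
  obtain ⟨s, rfl⟩ := h
  refine ⟨s.drop (s.length + x.length - K), ?_⟩
  rw [rtake, length_append, drop_append_of_le_length (by omega)]

theorem IsSuffix.append_infix_append {a' a b' b : List α} (ha : a' <:+ a) (hb : b' <+: b) :
    a' ++ b' <:+: a ++ b := by
  obtain ⟨s, rfl⟩ := ha
  obtain ⟨t, rfl⟩ := hb
  exact ⟨s, t, by simp⟩

theorem IsInfix.of_append {z a b : List α} {K : ℕ} (h : z <:+: a ++ b) (hK : z.length ≤ K) :
    z <:+: a ∨ z <:+: b ∨ z <:+: a.rtake K ++ b.take K := by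
  obtain ⟨s, t, hst⟩ := h
  rw [append_assoc, eq_comm, append_eq_append_iff] at hst
  rcases hst with ⟨a', -, rfl⟩ | ⟨c, rfl, hzt⟩
  · exact .inr (.inl ⟨a', t, by simp⟩)
  rw [append_eq_append_iff] at hzt
  rcases hzt with ⟨c', rfl, -⟩ | ⟨d, rfl, rfl⟩
  · exact .inl ⟨s, c', by simp⟩
  rw [length_append] at hK
  exact .inr (.inr (IsSuffix.append_infix_append
    ((suffix_append s c).suffix_rtake (by omega))
    (prefix_take_iff.2 ⟨prefix_append d t, by omega⟩)))

theorem setOf_infix_append (L : ℕ) (a b : List α) :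
    {z | z.length = L ∧ z <:+: a ++ b} =
      {z | z.length = L ∧ z <:+: a} ∪ {z | z.length = L ∧ z <:+: b} ∪
        {z | z.length = L ∧ z <:+: a.rtake L ++ b.take L} := by
  ext z
  simp only [Set.mem_union, Set.mem_ofPred_eq]
  constructor
  · rintro ⟨hz, h⟩
    rcases h.of_append hz.le with h | h | h
    exacts [.inl (.inl ⟨hz, h⟩), .inl (.inr ⟨hz, h⟩), .inr ⟨hz, h⟩]
  · rintro ((⟨hz, h⟩ | ⟨hz, h⟩) | ⟨hz, h⟩)
    · exact ⟨hz, h.trans (prefix_append _ _).isInfix⟩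
    · exact ⟨hz, h.trans (suffix_append _ _).isInfix⟩
    · exact ⟨hz, h.trans ((rtake_suffix _ _).append_infix_append (take_prefix _ _))⟩

def localProfile (L : ℕ) (l : List α) : List α × Set (List α) × List α :=
  (l.take L, {z | z.length = L ∧ z <:+: l}, l.rtake L)

theorem localProfile_append_congr {L : ℕ} {a a' b b' : List α}
    (ha : localProfile L a = localProfile L a') (hb : localProfile L b = localProfile L b') :
    localProfile L (a ++ b) = localProfile L (a' ++ b') := by
  simp only [localProfile, Prod.mk.injEq] at ha hb ⊢
  obtain ⟨ha₁, ha₂, ha₃⟩ := ha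
  obtain ⟨hb₁, hb₂, hb₃⟩ := hb
  refine ⟨?_, ?_, ?_⟩
  · rw [take_append_eq_take_append_take, ha₁, hb₁, ← take_append_eq_take_append_take]
  · rw [setOf_infix_append L a, setOf_infix_append L a', ha₂, hb₂, ha₃, hb₁]
  · rw [rtake_append_eq_rtake_append_rtake, ha₃, hb₃, ← rtake_append_eq_rtake_append_rtake]

theorem finite_range_localProfile [Finite α] (L : ℕ) :
    (Set.range (localProfile (α := α) L)).Finite := by
  refine ((finite_length_le α L).prod
    ((finite_length_eq α L).finite_subsets.prod (finite_length_le α L))).subset ?_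
  rintro _ ⟨l, rfl⟩
  exact ⟨length_take_le _ _, fun z hz => hz.1, by simp [localProfile, rtake]; omega⟩

theorem exists_lt_take_prefix_drop {l : List α} {n : ℕ} (hn : n < l.length)
    (h : ∀ z, z.length = 2 * n + 1 → z <:+: l ++ l → z <:+: l) :
    ∃ i, n < i ∧ l.take n <+: l.drop i := by
  have hz : (l.rtake (n + 1) ++ l.take n).length = 2 * n + 1 := by
    simp [rtake]; omega
  obtain ⟨s, t, hst⟩ :=
    h _ hz ((rtake_suffix _ _).append_infix_append (take_prefix _ _))
  have hr : (l.rtake (n + 1)).length = n + 1 := by simp [rtake]; omega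
  refine ⟨s.length + (n + 1), by omega, t, ?_⟩
  calc take n l ++ t
      = drop (s ++ l.rtake (n + 1)).length (s ++ (l.rtake (n + 1) ++ take n l) ++ t) := by simp
    _ = drop (s.length + (n + 1)) l := by rw [hst, length_append, hr]

end List

namespace FreeSemigroup

variable {α : Type*}

def toList (w : FreeSemigroup α) : List α := w.head :: w.tail

@[simp]
theorem toList_mul (a b : FreeSemigroup α) : (a * b).toList = a.toList ++ b.toList := rfl

@[simp]
theorem toList_of (x : α) : (of x).toList = [x] := rfl

def localCon (L : ℕ) : Con (FreeSemigroup α) where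
  toSetoid := Setoid.ker fun w => w.toList.localProfile L
  mul' ha hb := by
    simp only [Setoid.ker_def, toList_mul] at *
    exact List.localProfile_append_congr ha hb

instance [Finite α] (L : ℕ) : Finite (localCon (α := α) L).Quotient :=
  have : Finite (Set.range fun w : FreeSemigroup α => w.toList.localProfile L) :=
    ((List.finite_range_localProfile L).subset (Set.range_comp_subset_range _ _)).to_subtype
  Finite.of_equiv _ (Setoid.quotientKerEquivRange _).symm

end FreeSemigroup

open FreeSemigroup

section pref

variable {Γ : Type*}

theorem toList_pref (u : ℕ → Γ) (n : ℕ) : (pref u n).toList = (List.range (n + 1)).map u := by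
  induction n with
  | zero => rfl
  | succ n ih => simp [pref, ih, List.range_succ]

theorem pref_congr {u v : ℕ → Γ} {b : ℕ} (h : ∀ k ≤ b, u k = v k) : pref u b = pref v b := by
  induction b with
  | zero => simp [pref, h 0 le_rfl]
  | succ b ih => simp [pref, ih fun k hk => h k (by omega), h (b + 1) le_rfl]

theorem pref_add (u : ℕ → Γ) (a b : ℕ) :
    pref u (a + 1 + b) = pref u a * pref (fun k => u (a + 1 + k)) b := by
  induction b with
  | zero => rfl
  | succ b ih => rw [← add_assoc, pref, ih, mul_assoc]; rfl

def returnTimes (u : ℕ → Γ) (n : ℕ) : Set ℕ := {a | n ≤ a ∧ ∀ k ≤ n, u k = u (a + 1 + k)}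

theorem returnTimes_antitone (u : ℕ → Γ) : Antitone (returnTimes u) :=
  fun _ _ hmn _ ha => ⟨hmn.trans ha.1, fun k hk => ha.2 k (hk.trans hmn)⟩

theorem returnTimes_nonempty {u : ℕ → Γ} (hu : ∀ n, ∃ m > n, ∀ k < n, u k = u (m + k)) (n : ℕ) :
    (returnTimes u n).Nonempty := by
  obtain ⟨m, hm, hmk⟩ := hu (n + 1)
  exact ⟨m - 1, by omega, fun k hk => by rw [hmk k (by omega)]; congr 1; omega⟩

theorem pref_add_of_mem_returnTimes {u : ℕ → Γ} {a j : ℕ} (ha : a ∈ returnTimes u j) :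
    pref u (a + 1 + j) = pref u a * pref u j := by
  rw [pref_add, pref_congr fun k hk => (ha.2 k hk).symm]

theorem add_mem_returnTimes {u : ℕ → Γ} {n j a : ℕ} (hj : j ∈ returnTimes u n)
    (ha : a ∈ returnTimes u (n + j + 1)) : a + 1 + j ∈ returnTimes u n := by
  refine ⟨by have := ha.1; omega, fun k hk => ?_⟩
  rw [hj.2 k hk, ha.2 (j + 1 + k) (by omega)]
  congr 1
  omega

end pref

section Topology

variable {S : Type*} [Semigroup S] [TopologicalSpace S]

theorem exists_isIdempotentElem_forall_mem_closure [CompactSpace S] [T2Space S]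
    [SeparatelyContinuousMul S] {B : ℕ → Set S} (hne : ∀ n, (B n).Nonempty) (hanti : Antitone B)
    (hmul : ∀ n, ∀ y ∈ B n, ∃ N, ∀ x ∈ B N, x * y ∈ B n) :
    ∃ e, IsIdempotentElem e ∧ ∀ n, e ∈ closure (B n) := by
  have hA : (⋂ n, closure (B n)).Nonempty :=
    IsCompact.nonempty_iInter_of_sequence_nonempty_isCompact_isClosed _
      (fun n => closure_mono (hanti n.le_succ)) (fun n => (hne n).closure)
      isClosed_closure.isCompact fun _ => isClosed_closure
  have hAmul :
      ∀ x ∈ ⋂ n, closure (B n), ∀ y ∈ ⋂ n, closure (B n), x * y ∈ ⋂ n, closure (B n) := by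
    simp only [Set.mem_iInter]
    intro x hx y hy n
    have hxB : ∀ y' ∈ B n, x * y' ∈ closure (B n) := fun y' hy' =>
      let ⟨N, hN⟩ := hmul n y' hy'
      map_mem_closure (f := (· * y')) (continuous_mul_const y') (hx N) fun x' hx' => hN x' hx'
    simpa only [closure_closure] using map_mem_closure (continuous_const_mul x) (hy n) hxB
  obtain ⟨e, he, hee⟩ := exists_idempotent_in_compact_subsemigroup continuous_mul_const _ hA
    (isClosed_iInter fun _ => isClosed_closure).isCompact hAmul
  exact ⟨e, hee, Set.mem_iInter.1 he⟩

theorem MapClusterPt.frequently_isIdempotentElem {X F : Type*} [Semigroup F] {g : S →ₙ* F}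
    (hg : IsLocallyConstant g) {e : S} (he : IsIdempotentElem e) {l : Filter X} {y : X → S}
    (h : MapClusterPt e l y) : ∃ᶠ i in l, IsIdempotentElem (g (y i)) := by
  refine (mapClusterPt_iff_frequently.1 h _ ((hg.isOpen_fiber (g e)).mem_nhds rfl)).mono ?_
  intro i (hi : g (y i) = g e)
  exact hi ▸ he.map g

end Topology

section Profinite

variable {Γ S : Type*} [Semigroup S] [TopologicalSpace S]

def HasFiniteExtensions (ι : FreeSemigroup Γ →ₙ* S) : Prop :=
  ∀ (F : Type) [Semigroup F] [Fintype F] [TopologicalSpace F] [DiscreteTopology F]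
    (f : FreeSemigroup Γ →ₙ* F), ∃ g : S →ₙ* F, Continuous g ∧ ∀ w, g (ι w) = f w

theorem HasFiniteExtensions.exists_isLocallyConstant {ι : FreeSemigroup Γ →ₙ* S}
    (huniv : HasFiniteExtensions ι) {F : Type*} [Semigroup F] [Finite F]
    (f : FreeSemigroup Γ →ₙ* F) : ∃ g : S →ₙ* F, IsLocallyConstant g ∧ ∀ w, g (ι w) = f w := by
  -- `HasFiniteExtensions` only speaks of semigroups in `Type`, so go through `Shrink.{0} F`.
  let e : Shrink.{0} F ≃* F := Shrink.mulEquiv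
  let _ : Fintype (Shrink.{0} F) := Fintype.ofFinite _
  let _ : TopologicalSpace (Shrink.{0} F) := ⊥
  have : DiscreteTopology (Shrink.{0} F) := ⟨rfl⟩
  obtain ⟨g, hg, hgf⟩ := huniv _ (e.symm.toMulHom.comp f)
  refine ⟨e.toMulHom.comp g, ((IsLocallyConstant.iff_continuous g).2 hg).comp e, fun w => ?_⟩
  simp [hgf]

theorem exists_isIdempotentElem_mapClusterPt_pref [CompactSpace S] [T2Space S]
    [SeparatelyContinuousMul S] (ι : FreeSemigroup Γ →ₙ* S) {u : ℕ → Γ}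
    (hu : ∀ n, ∃ m > n, ∀ k < n, u k = u (m + k)) :
    ∃ e : S, IsIdempotentElem e ∧ MapClusterPt e atTop fun n => ι (pref u n) := by
  let B n := (fun a => ι (pref u a)) '' returnTimes u n
  have hmul : ∀ n, ∀ y ∈ B n, ∃ N, ∀ x ∈ B N, x * y ∈ B n := by
    rintro n _ ⟨j, hj, rfl⟩
    refine ⟨n + j + 1, ?_⟩
    rintro _ ⟨a, ha, rfl⟩
    have haj : a ∈ returnTimes u j := returnTimes_antitone u (by omega) ha
    exact ⟨a + 1 + j, add_mem_returnTimes hj ha, by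
      simp only [pref_add_of_mem_returnTimes haj, map_mul]⟩
  obtain ⟨e, he, hcl⟩ := exists_isIdempotentElem_forall_mem_closure
    (fun n => (returnTimes_nonempty hu n).image _)
    (fun _ _ hmn => Set.image_mono (returnTimes_antitone u hmn)) hmul
  exact ⟨e, he, mapClusterPt_atTop_iff_forall_mem_closure.2 fun n =>
    closure_mono (Set.image_mono fun a ha => ha.1) (hcl n)⟩

theorem recurrent_of_isIdempotentElem_mapClusterPt [Finite Γ] {ι : FreeSemigroup Γ →ₙ* S}
    (huniv : HasFiniteExtensions ι)
    {u : ℕ → Γ} {e : S} (he : IsIdempotentElem e)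
    (h : MapClusterPt e atTop fun n => ι (pref u n)) (n : ℕ) :
    ∃ m > n, ∀ k < n, u k = u (m + k) := by
  obtain ⟨g, hg, hgι⟩ :=
    huniv.exists_isLocallyConstant (localCon (α := Γ) (2 * n + 1)).mkMulHom
  obtain ⟨m, hnm, hm⟩ := frequently_atTop.1 (h.frequently_isIdempotentElem hg he) n
  set l := (pref u m).toList
  have hl : l = (List.range (m + 1)).map u := toList_pref u m
  rw [hgι, IsIdempotentElem, ← map_mul] at hm
  have hprof : (l ++ l).localProfile (2 * n + 1) = l.localProfile (2 * n + 1) :=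
    (localCon _).eq.1 hm
  obtain ⟨i, hi, hpre⟩ := l.exists_lt_take_prefix_drop (by simp [hl]; omega)
    fun z hz hzl => by
      have hz' : z ∈ (l.localProfile (2 * n + 1)).2.1 := hprof ▸ ⟨hz, hzl⟩
      exact hz'.2
  refine ⟨i, hi, fun k hk => ?_⟩
  simpa [hl] using hpre.getElem (i := k) (by simp [hl]; omega)

end Profinite

theorem stmt_18_general {Γ S : Type*} [Fintype Γ] [Semigroup S] [TopologicalSpace S]
    [CompactSpace S] [T2Space S] [ContinuousMul S]
    (ι : FreeSemigroup Γ →ₙ* S)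
    (huniv : ∀ (F : Type) [Semigroup F] [Fintype F] [TopologicalSpace F]
        [DiscreteTopology F] (f : FreeSemigroup Γ →ₙ* F),
        ∃ g : S →ₙ* F, Continuous g ∧ ∀ w, g (ι w) = f w)
    (u : ℕ → Γ) :
    (∀ n : ℕ, ∃ m > n, ∀ k < n, u k = u (m + k)) ↔
      ∃ e : S, e * e = e ∧
        MapClusterPt e Filter.atTop (fun n => ι (pref u n)) :=
  ⟨exists_isIdempotentElem_mapClusterPt_pref ι, fun ⟨_, he, h⟩ =>
    recurrent_of_isIdempotentElem_mapClusterPt huniv he h⟩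

/-- Let Γ be a finite alphabet, embedded via ι in the free
profinite semigroup over Γ (a profinite semigroup in which Γ⁺ sits injectively
and densely, with the universal extension property for homomorphisms into
finite semigroups). A right-infinite word u over Γ is recurrent if and only if
some cluster point of its sequence of prefixes is idempotent. -/
theorem stmt_18 {Γ S : Type*} [Fintype Γ] [Semigroup S] [TopologicalSpace S]
    [CompactSpace S] [T2Space S] [TotallyDisconnectedSpace S] [ContinuousMul S]
    (ι : FreeSemigroup Γ →ₙ* S) (hinj : Function.Injective ι)
    (hdense : DenseRange ι)
    (huniv : ∀ (F : Type) [Semigroup F] [Fintype F] [TopologicalSpace F]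
        [DiscreteTopology F] (f : FreeSemigroup Γ →ₙ* F),
        ∃ g : S →ₙ* F, Continuous g ∧ ∀ w, g (ι w) = f w)
    (u : ℕ → Γ) :
    (∀ n : ℕ, ∃ m > n, ∀ k < n, u k = u (m + k)) ↔
      ∃ e : S, e * e = e ∧
        MapClusterPt e Filter.atTop (fun n => ι (pref u n)) :=
  stmt_18_general ι huniv u
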